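/- arXiv:2305.14199 — 10 statements merged into one kernel-verified Lean document; each statement's English description precedes it below -/
import Mathlib

section
/- Let x, z, v, v', w, w' be integers, each equal to 0 or 1, and suppose ((v·x − v')² + (w·z − w')²)·(v·x + w·z) = 0. Then there exist integers q and q', each equal to 0 or 1, such that 1 − x = (v·(1−v')·(1−w) + v·w'·(v'·(1−w) + (1−v')·w) + q·((1−v)·(1−w) + (1−v)·(1−v')·w·w' + v·v'·(1−w)·(1−w')))·z + (v·(1−v') + v·v'·w' + q'·((1−v) + v·v'·(1−w')))·(1−z). -/
theorem boole_caseI_solution_one_sub_x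
    (x z v v' w w' : ℤ)
    (hx : x = 0 ∨ x = 1) (hz : z = 0 ∨ z = 1)
    (hv : v = 0 ∨ v = 1) (hv' : v' = 0 ∨ v' = 1)
    (hw : w = 0 ∨ w = 1) (hw' : w' = 0 ∨ w' = 1)
    (hE : ((v * x - v') ^ 2 + (w * z - w') ^ 2) * (v * x + w * z) = 0) :
    ∃ q q' : ℤ, (q = 0 ∨ q = 1) ∧ (q' = 0 ∨ q' = 1) ∧
      1 - x = (v * (1 - v') * (1 - w) + v * w' * (v' * (1 - w) + (1 - v') * w) +
                q * ((1 - v) * (1 - w) + (1 - v) * (1 - v') * w * w' +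
                      v * v' * (1 - w) * (1 - w'))) * z +
              (v * (1 - v') + v * v' * w' +
                q' * ((1 - v) + v * v' * (1 - w'))) * (1 - z) := by
  refine ⟨1 - x, 1 - x, ?_, ?_, ?_⟩ <;>
    rcases hx with rfl | rfl <;> rcases hz with rfl | rfl <;>
    rcases hv with rfl | rfl <;> rcases hv' with rfl | rfl <;>
    rcases hw with rfl | rfl <;> rcases hw' with rfl | rfl <;>
    simp_all
end

section
/- Let x, z, v, v', w, w' be integers, each equal to 0 or 1, and suppose ((v·x − v')² + (w·z − w')²)·(v·x + w·z) = 0. Then there exist integers q and q', each equal to 0 or 1, such that v·x = (v·v'·w·w' + q·(v·v'·(1−w)·(1−w')))·z + q'·(v·v'·(1−w'))·(1−z). -/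
theorem boole_caseI_solution_vx
    (x z v v' w w' : ℤ)
    (hx : x = 0 ∨ x = 1) (hz : z = 0 ∨ z = 1)
    (hv : v = 0 ∨ v = 1) (hv' : v' = 0 ∨ v' = 1)
    (hw : w = 0 ∨ w = 1) (hw' : w' = 0 ∨ w' = 1)
    (hE : ((v * x - v') ^ 2 + (w * z - w') ^ 2) * (v * x + w * z) = 0) :
    ∃ q q' : ℤ, (q = 0 ∨ q = 1) ∧ (q' = 0 ∨ q' = 1) ∧
      v * x = (v * v' * w * w' + q * (v * v' * (1 - w) * (1 - w'))) * z +
              q' * (v * v' * (1 - w')) * (1 - z) := by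
  refine ⟨v * x, v * x, ?_, ?_, ?_⟩ <;>
    rcases hx with rfl | rfl <;> rcases hz with rfl | rfl <;>
    rcases hv with rfl | rfl <;> rcases hv' with rfl | rfl <;>
    rcases hw with rfl | rfl <;> rcases hw' with rfl | rfl <;> simp_all <;> omega
end

section
/- Let x, z, v, v', w, w' be integers, each equal to 0 or 1, and suppose ((v·x − v')² + w·z)·(v·x + (w·z − w')²) = 0. Then there exist integers q and q', each equal to 0 or 1, such that x = (v·v'·(1−w)·w' + q·((1−v)·(1−v')·(1−w) + (1−v)·w·w' + v'·(1−w)·(1−w')))·z + (v·v'·w' + q'·((1−v)·(1−v') + v'·(1−w')))·(1−z). -/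
theorem boole_caseII_solution_x
    (x z v v' w w' : ℤ)
    (hx : x = 0 ∨ x = 1) (hz : z = 0 ∨ z = 1)
    (hv : v = 0 ∨ v = 1) (hv' : v' = 0 ∨ v' = 1)
    (hw : w = 0 ∨ w = 1) (hw' : w' = 0 ∨ w' = 1)
    (hE : ((v * x - v') ^ 2 + w * z) * (v * x + (w * z - w') ^ 2) = 0) :
    ∃ q q' : ℤ, (q = 0 ∨ q = 1) ∧ (q' = 0 ∨ q' = 1) ∧
      x = (v * v' * (1 - w) * w' +
            q * ((1 - v) * (1 - v') * (1 - w) + (1 - v) * w * w' +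
                  v' * (1 - w) * (1 - w'))) * z +
          (v * v' * w' + q' * ((1 - v) * (1 - v') + v' * (1 - w'))) * (1 - z) := by
  refine ⟨x, x, hx, hx, ?_⟩
  rcases hx with rfl|rfl <;> rcases hz with rfl|rfl <;> rcases hv with rfl|rfl <;>
    rcases hv' with rfl|rfl <;> rcases hw with rfl|rfl <;> rcases hw' with rfl|rfl <;>
    omega
end

section
/- Let x, z, v, v', w, w' be integers, each equal to 0 or 1, and suppose ((v·x − v')² + w·z)·(v·x + (w·z − w')²) = 0. Then there exist integers q and q', each equal to 0 or 1, such that 1 − x = (v·(1−v')·(1−w) + v·w·w' + q·((1−v)·(1−v')·(1−w) + (1−v)·w·w' + v'·(1−w)·(1−w')))·z + (v·(1−v') + q'·((1−v)·(1−v') + v'·(1−w')))·(1−z). -/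
theorem boole_caseII_solution_one_sub_x
    (x z v v' w w' : ℤ)
    (hx : x = 0 ∨ x = 1) (hz : z = 0 ∨ z = 1)
    (hv : v = 0 ∨ v = 1) (hv' : v' = 0 ∨ v' = 1)
    (hw : w = 0 ∨ w = 1) (hw' : w' = 0 ∨ w' = 1)
    (hE : ((v * x - v') ^ 2 + w * z) * (v * x + (w * z - w') ^ 2) = 0) :
    ∃ q q' : ℤ, (q = 0 ∨ q = 1) ∧ (q' = 0 ∨ q' = 1) ∧
      1 - x = (v * (1 - v') * (1 - w) + v * w * w' +
                q * ((1 - v) * (1 - v') * (1 - w) + (1 - v) * w * w' +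
                      v' * (1 - w) * (1 - w'))) * z +
              (v * (1 - v') + q' * ((1 - v) * (1 - v') + v' * (1 - w'))) * (1 - z) := by
  refine ⟨1 - x, 1 - x, by omega, by omega, ?_⟩
  rcases hx with rfl | rfl <;> rcases hz with rfl | rfl <;> rcases hv with rfl | rfl <;>
    rcases hv' with rfl | rfl <;> rcases hw with rfl | rfl <;> rcases hw' with rfl | rfl <;>
    revert hE <;> norm_num
end

section
/- Let x, z, v, v', w, w' be integers, each equal to 0 or 1, and suppose ((v·x − v')² + w·z)·(v·x + (w·z − w')²) = 0. Then there exist integers q and q', each equal to 0 or 1, such that v·x = (v·v'·(1−w)·w' + q·(v·v'·(1−w)·(1−w')))·z + (v·v'·w' + q'·(v·v'·(1−w')))·(1−z). -/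
theorem boole_caseII_solution_vx
    (x z v v' w w' : ℤ)
    (hx : x = 0 ∨ x = 1) (hz : z = 0 ∨ z = 1)
    (hv : v = 0 ∨ v = 1) (hv' : v' = 0 ∨ v' = 1)
    (hw : w = 0 ∨ w = 1) (hw' : w' = 0 ∨ w' = 1)
    (hE : ((v * x - v') ^ 2 + w * z) * (v * x + (w * z - w') ^ 2) = 0) :
    ∃ q q' : ℤ, (q = 0 ∨ q = 1) ∧ (q' = 0 ∨ q' = 1) ∧
      v * x = (v * v' * (1 - w) * w' + q * (v * v' * (1 - w) * (1 - w'))) * z +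
              (v * v' * w' + q' * (v * v' * (1 - w'))) * (1 - z) := by
  refine ⟨v * x, v * x, ?_, ?_, ?_⟩ <;>
    rcases hx with rfl | rfl <;> rcases hz with rfl | rfl <;>
    rcases hv with rfl | rfl <;> rcases hv' with rfl | rfl <;>
    rcases hw with rfl | rfl <;> rcases hw' with rfl | rfl <;>
    simp_all <;> omega
end

section
/- Let x, y, z, v, w be integers, each equal to 0 or 1. If v·x = y and z = w·y, then there exists an integer q, equal to 0 or 1, such that 1 − x = (v·w + q·(1 − v·w))·(1 − z). -/
theorem boole_caseI_arg_b
    (x y z v w : ℤ)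
    (hx : x = 0 ∨ x = 1) (hy : y = 0 ∨ y = 1) (hz : z = 0 ∨ z = 1)
    (hv : v = 0 ∨ v = 1) (hw : w = 0 ∨ w = 1)
    (h1 : v * x = y) (h2 : z = w * y) :
    ∃ q : ℤ, (q = 0 ∨ q = 1) ∧
      1 - x = (v * w + q * (1 - v * w)) * (1 - z) := by
  refine ⟨1 - x, ?_, ?_⟩ <;>
  rcases hx with rfl|rfl <;> rcases hy with rfl|rfl <;> rcases hz with rfl|rfl <;>
  rcases hv with rfl|rfl <;> rcases hw with rfl|rfl <;> omega
end

section
/- Let x, y, z, v, w be integers, each equal to 0 or 1. If x = v·y and z = w·(1 − y), then there exists an integer q, equal to 0 or 1, such that x = (v·w + q·v·(1 − w))·(1 − z). -/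
theorem boole_caseII_arg_a
    (x y z v w : ℤ)
    (hx : x = 0 ∨ x = 1) (hy : y = 0 ∨ y = 1) (hz : z = 0 ∨ z = 1)
    (hv : v = 0 ∨ v = 1) (hw : w = 0 ∨ w = 1)
    (h1 : x = v * y) (h2 : z = w * (1 - y)) :
    ∃ q : ℤ, (q = 0 ∨ q = 1) ∧
      x = (v * w + q * v * (1 - w)) * (1 - z) := by
  refine ⟨x, hx, ?_⟩
  rcases hy with rfl | rfl <;> rcases hv with rfl | rfl <;> rcases hw with rfl | rfl <;>
    subst h1 <;> subst h2 <;> ring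
end

section
/- Let x, y, z, v, w be integers, each equal to 0 or 1. If v·x = y and w·z = 1 − y, then there exists an integer q, equal to 0 or 1, such that 1 − x = (v·w + q·(1 − v)·w)·z. -/
theorem boole_caseII_arg_b
    (x y z v w : ℤ)
    (hx : x = 0 ∨ x = 1) (hy : y = 0 ∨ y = 1) (hz : z = 0 ∨ z = 1)
    (hv : v = 0 ∨ v = 1) (hw : w = 0 ∨ w = 1)
    (h1 : v * x = y) (h2 : w * z = 1 - y) :
    ∃ q : ℤ, (q = 0 ∨ q = 1) ∧
      1 - x = (v * w + q * (1 - v) * w) * z := by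
  refine ⟨1 - x, by omega, ?_⟩
  rcases hx with rfl | rfl <;> rcases hy with rfl | rfl <;> rcases hz with rfl | rfl <;>
    rcases hv with rfl | rfl <;> rcases hw with rfl | rfl <;> omega
end

section
/- Let x, y, z, v, w be integers, each equal to 0 or 1. If v·x = v·y and z = w·(1 − y), then there exists an integer q, equal to 0 or 1, such that v·x = (v·w + q·v·(1 − w))·(1 − z). -/
theorem boole_caseII_arg_c
    (x y z v w : ℤ)
    (hx : x = 0 ∨ x = 1) (hy : y = 0 ∨ y = 1) (hz : z = 0 ∨ z = 1)
    (hv : v = 0 ∨ v = 1) (hw : w = 0 ∨ w = 1)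
    (h1 : v * x = v * y) (h2 : z = w * (1 - y)) :
    ∃ q : ℤ, (q = 0 ∨ q = 1) ∧
      v * x = (v * w + q * v * (1 - w)) * (1 - z) := by
  refine ⟨x, hx, ?_⟩
  rcases hx with hx|hx <;> rcases hy with hy|hy <;> rcases hv with hv|hv <;>
    rcases hw with hw|hw <;> subst hx hy hv hw <;> subst h2 <;> omega
end

section
/- Let x, y, z, v, w be integers, each equal to 0 or 1. If v·x = y and z = w·(1 − y), then there exists an integer q, equal to 0 or 1, such that v·x = (v·w + q·v·(1 − w))·(1 − z). -/
theorem boole_caseII_arg_d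
    (x y z v w : ℤ)
    (hx : x = 0 ∨ x = 1) (hy : y = 0 ∨ y = 1) (hz : z = 0 ∨ z = 1)
    (hv : v = 0 ∨ v = 1) (hw : w = 0 ∨ w = 1)
    (h1 : v * x = y) (h2 : z = w * (1 - y)) :
    ∃ q : ℤ, (q = 0 ∨ q = 1) ∧
      v * x = (v * w + q * v * (1 - w)) * (1 - z) := by
  refine ⟨y, hy, ?_⟩
  rcases hx with h|h <;> rcases hy with h'|h' <;> rcases hv with h''|h'' <;>
    rcases hw with h3|h3 <;> subst_vars <;> omega
end
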